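/- Let S = U·D·H·Rz(γ) be a (non-unitary) N-type operator with D = diag(cos θ, sin θ). If the first qubit of a 1D cluster state with information |ψ⟩ encoded is projected onto the state proportional to (S†)^{−1}·Rz(−ξ)·H|1⟩ (outcome 1 in the Strategy-I basis), the teleported gate is Rx(μ′)·H·Rz(ξ) where the byproduct angle μ′ satisfies tan(μ′/2) = (1 − cos 2θ cos(γ − ξ)) / (cos 2θ sin(γ − ξ)). -/

import Mathlib

open Matrix

noncomputable section

def Rz (ξ : ℂ) : Matrix (Fin 2) (Fin 2) ℂ :=
  !![Complex.exp (-Complex.I * ξ / 2), 0; 0, Complex.exp (Complex.I * ξ / 2)]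

def Hm : Matrix (Fin 2) (Fin 2) ℂ := ((Real.sqrt 2 : ℂ))⁻¹ • !![1, 1; 1, -1]

def Rx (ξ : ℂ) : Matrix (Fin 2) (Fin 2) ℂ := Hm * Rz ξ * Hm

def Zm : Matrix (Fin 2) (Fin 2) ℂ := !![1, 0; 0, -1]

def e1 : Fin 2 → ℂ := fun i => if i = 1 then 1 else 0

def plus : Fin 2 → ℂ := fun _ => ((Real.sqrt 2 : ℂ))⁻¹

def minus : Fin 2 → ℂ := fun i =>
  if i = 0 then ((Real.sqrt 2 : ℂ))⁻¹ else -((Real.sqrt 2 : ℂ))⁻¹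

open Complex ComplexConjugate

/-!
Because `U` is unitary, the amplitudes `⟨m⊥|S|±⟩` depend on `S` only through its Gram matrix
`SᴴS = ½ [[1, c e^{iγ}], [c e^{-iγ}, 1]]`, `c = cos 2θ`. With `z = 1 - c e^{i(γ-ξ)}` one finds
`⟨m⊥|S|+⟩ + ⟨m⊥|S|-⟩ = ½ e^{-iξ/2} z̄` and `⟨m⊥|S|+⟩ - ⟨m⊥|S|-⟩ = -½ e^{iξ/2} z`.
Since `H (a I + b Z) = H diag(a + b, a - b)`, `Rx(μ) H Rz(ξ) = H Rz(μ + ξ)` and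
`z̄ = e^{-2i arg z} z`, the teleported gate is `Rx(μ') H Rz(ξ)` with `μ' = 2 arg z + π`, so
`tan(μ'/2) = -Re z / Im z`. For `0 < θ < π/2` we have `|c| < 1`, hence `z ≠ 0` and the prefactor does not vanish.
-/

lemma inv_sqrt_two_sq : ((Real.sqrt 2 : ℂ))⁻¹ ^ 2 = 2⁻¹ := by
  rw [inv_pow, ← ofReal_pow, Real.sq_sqrt zero_le_two, ofReal_ofNat]

lemma Hm_conjTranspose : Hmᴴ = Hm := by
  ext i j
  fin_cases i <;> fin_cases j <;> simp [Hm]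

lemma Hm_mul_Hm : Hm * Hm = 1 := by
  ext i j
  fin_cases i <;> fin_cases j <;>
    simp [Hm, Matrix.mul_apply, Fin.sum_univ_succ, ← two_mul, ← sq, -inv_pow, inv_sqrt_two_sq]

lemma Hm_mul_diag_mul_Hm (p q : ℂ) :
    Hm * !![p, 0; 0, q] * Hm = (2⁻¹ : ℂ) • !![p + q, p - q; p - q, p + q] := by
  ext i j
  fin_cases i <;> fin_cases j <;> simp [Hm, Matrix.mul_apply, Fin.sum_univ_succ] <;>
    ring_nf <;> rw [inv_sqrt_two_sq] <;> ring

lemma Rz_add (s t : ℂ) : Rz (s + t) = Rz s * Rz t := by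
  ext i j
  fin_cases i <;> fin_cases j <;> simp [Rz, ← exp_add] <;> ring_nf

lemma Rz_ofReal_conjTranspose (t : ℝ) : (Rz t)ᴴ = Rz (-t) := by
  ext i j
  fin_cases i <;> fin_cases j <;> simp [Rz, ← exp_conj, map_ofNat]

lemma Rz_conjTranspose_mul_mul_Rz (t : ℝ) (p q : ℂ) :
    (Rz t)ᴴ * !![p, q; q, p] * Rz t = !![p, q * cexp (t * I); q * cexp (-t * I), p] := by
  rw [Rz_ofReal_conjTranspose]
  ext i j
  fin_cases i <;> fin_cases j <;> simp [Rz, Matrix.mul_apply, Fin.sum_univ_succ] <;>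
    rw [mul_right_comm, ← exp_add] <;> ring_nf <;> simp

lemma Rx_mul_Hm_mul_Rz (μ ξ : ℂ) : Rx μ * Hm * Rz ξ = Hm * Rz (μ + ξ) := by
  rw [Rx, Rz_add, Matrix.mul_assoc, Matrix.mul_assoc, ← Matrix.mul_assoc Hm Hm, Hm_mul_Hm,
    Matrix.one_mul, Matrix.mul_assoc]

lemma smul_one_add_smul_Zm (a b : ℂ) :
    a • (1 : Matrix (Fin 2) (Fin 2) ℂ) + b • Zm = !![a + b, 0; 0, a - b] := by
  ext i j
  fin_cases i <;> fin_cases j <;> simp [Zm, sub_eq_add_neg]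

lemma Hm_mul_smul_one_add_smul_Zm {a b μ ξ : ℂ} (h : a + b = (a - b) * cexp (-I * (μ + ξ))) :
    Hm * (a • 1 + b • Zm) = ((a - b) * cexp (-I * (μ + ξ) / 2)) • (Rx μ * Hm * Rz ξ) := by
  rw [Rx_mul_Hm_mul_Rz, ← Matrix.mul_smul, smul_one_add_smul_Zm]
  congr 1
  ext i j
  fin_cases i <;> fin_cases j <;> simp [Rz]
  · rw [h, mul_assoc, ← exp_add]; ring_nf
  · rw [mul_assoc, ← exp_add]; ring_nf; simp

lemma conj_eq_exp_neg_two_arg_mul (z : ℂ) : conj z = cexp (-2 * arg z * I) * z := by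
  have hz := norm_mul_exp_arg_mul_I z
  set φ := arg z
  rw [← hz, map_mul, conj_ofReal, ← exp_conj, map_mul, conj_ofReal, conj_I, mul_left_comm,
    ← exp_add]
  ring_nf

lemma add_eq_sub_mul_exp_of_conj {a b w z : ℂ} {ξ : ℝ}
    (hadd : a + b = w * cexp (-(ξ / 2) * I) * conj z)
    (hsub : a - b = -(w * cexp (ξ / 2 * I) * z)) :
    a + b = (a - b) * cexp (-I * (((2 * arg z + Real.pi : ℝ) : ℂ) + ξ)) := by
  rw [hadd, hsub, conj_eq_exp_neg_two_arg_mul]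
  push_cast
  rw [show -I * (2 * (arg z : ℂ) + Real.pi + ξ) =
      -2 * arg z * I + -(ξ / 2) * I + (-(ξ / 2) * I + -(Real.pi * I)) by ring]
  simp only [exp_add, exp_neg (Real.pi * I), exp_pi_mul_I]
  have hξ : cexp (-(ξ / 2) * I) * cexp (ξ / 2 * I) = 1 := by rw [← exp_add]; simp
  linear_combination (-(w * z * cexp (-2 * arg z * I) * cexp (-(ξ / 2) * I))) * hξ

-- Both sides are `0` when `z.im = 0`, by `x / 0 = 0` and `Real.cos (π / 2) = 0`.
lemma tan_arg_add_pi_div_two (z : ℂ) : Real.tan (arg z + Real.pi / 2) = -z.re / z.im := by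
  rcases eq_or_ne z 0 with rfl | hz
  · simp [Real.tan_eq_sin_div_cos]
  rw [Real.tan_eq_sin_div_cos, Real.sin_add_pi_div_two, Real.cos_add_pi_div_two, cos_arg hz,
    sin_arg]
  have : ‖z‖ ≠ 0 := norm_ne_zero_iff.mpr hz
  field_simp

lemma abs_cos_lt_one_of_sin_ne_zero {x : ℝ} (h : Real.sin x ≠ 0) : |Real.cos x| < 1 := by
  rw [← sq_lt_one_iff_abs_lt_one, Real.cos_sq']
  have := pow_pos (abs_pos.mpr h) 2
  rw [sq_abs] at this
  linarith

lemma one_sub_mul_exp_ne_zero {c : ℝ} (hc : |c| < 1) (δ : ℝ) : 1 - c * cexp (δ * I) ≠ 0 := by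
  intro h
  have := congrArg norm (sub_eq_zero.mp h)
  simp only [norm_one, Complex.norm_mul, norm_real, Real.norm_eq_abs, norm_exp_ofReal_mul_I,
    mul_one] at this
  linarith

def nTypeOp (U : Matrix (Fin 2) (Fin 2) ℂ) (θ γ : ℝ) : Matrix (Fin 2) (Fin 2) ℂ :=
  U * !![(Real.cos θ : ℂ), 0; 0, (Real.sin θ : ℂ)] * Hm * Rz γ

lemma nTypeOp_conjTranspose_mul_self {U : Matrix (Fin 2) (Fin 2) ℂ} (hU : Uᴴ * U = 1)
    (θ γ : ℝ) :
    (nTypeOp U θ γ)ᴴ * nTypeOp U θ γ =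
      (2⁻¹ : ℂ) • !![1, Real.cos (2 * θ) * cexp (γ * I); Real.cos (2 * θ) * cexp (-γ * I), 1] := by
  set D : Matrix (Fin 2) (Fin 2) ℂ := !![(Real.cos θ : ℂ), 0; 0, (Real.sin θ : ℂ)]
  have hD : Dᴴ * D = !![(Real.cos θ : ℂ) ^ 2, 0; 0, (Real.sin θ : ℂ) ^ 2] := by
    ext i j
    fin_cases i <;> fin_cases j <;>
      simp [D, Matrix.mul_apply, Fin.sum_univ_succ, sq, -ofReal_cos, -ofReal_sin]
  have hcos : (Real.cos θ : ℂ) ^ 2 - (Real.sin θ : ℂ) ^ 2 = Real.cos (2 * θ) := by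
    push_cast; rw [Complex.cos_two_mul, Complex.cos_sq']; ring
  have hsin : (Real.cos θ : ℂ) ^ 2 + (Real.sin θ : ℂ) ^ 2 = 1 := by
    push_cast; exact Complex.cos_sq_add_sin_sq _
  calc _ = (Rz γ)ᴴ * (Hm * (Dᴴ * (Uᴴ * U) * D) * Hm) * Rz γ := by
        simp only [nTypeOp, conjTranspose_mul, Hm_conjTranspose, Matrix.mul_assoc, D]
    _ = (2⁻¹ : ℂ) • ((Rz γ)ᴴ * !![1, (Real.cos (2 * θ) : ℂ); Real.cos (2 * θ), 1] * Rz γ) := by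
        rw [hU, Matrix.mul_one, hD, Hm_mul_diag_mul_Hm, hcos, hsin, Matrix.mul_smul,
          Matrix.smul_mul]
    _ = _ := by rw [Rz_conjTranspose_mul_mul_Rz]

def amplitude (S : Matrix (Fin 2) (Fin 2) ℂ) (ξ : ℝ) (w : Fin 2 → ℂ) : ℂ :=
  star ((S * Rz ((-ξ : ℝ) : ℂ) * Hm) *ᵥ e1) ⬝ᵥ S *ᵥ w

lemma star_mulVec_dotProduct_mulVec {m n k α : Type*} [Fintype m] [Fintype n] [Fintype k]
    [CommSemiring α] [StarRing α] (A : Matrix m n α) (B : Matrix m k α) (x : n → α) (y : k → α) :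
    star (A *ᵥ x) ⬝ᵥ B *ᵥ y = star x ⬝ᵥ (Aᴴ * B) *ᵥ y := by
  rw [star_mulVec, dotProduct_mulVec, vecMul_vecMul, ← dotProduct_mulVec]

lemma amplitude_eq (S : Matrix (Fin 2) (Fin 2) ℂ) (ξ : ℝ) (w : Fin 2 → ℂ) :
    amplitude S ξ w = star e1 ⬝ᵥ (Hm * Rz ξ * (Sᴴ * S)) *ᵥ w := by
  rw [amplitude, star_mulVec_dotProduct_mulVec, conjTranspose_mul, conjTranspose_mul,
    Hm_conjTranspose, Rz_ofReal_conjTranspose, ofReal_neg, neg_neg]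
  simp only [Matrix.mul_assoc]

section Amplitudes

variable {S : Matrix (Fin 2) (Fin 2) ℂ} {c γ : ℝ}

lemma amplitude_plus_add_amplitude_minus
    (hS : Sᴴ * S = (2⁻¹ : ℂ) • !![1, c * cexp (γ * I); c * cexp (-γ * I), 1]) (ξ : ℝ) :
    amplitude S ξ plus + amplitude S ξ minus =
      2⁻¹ * cexp (-(ξ / 2) * I) * conj (1 - c * cexp ((γ - ξ : ℝ) * I)) := by
  rw [amplitude_eq, amplitude_eq, ← dotProduct_add, ← mulVec_add, hS]
  simp [e1, plus, minus, Hm, Rz, mulVec, dotProduct, Fin.sum_univ_succ, Matrix.mul_apply,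
    ← exp_conj]
  have hE : cexp (-(ξ / 2) * I) * cexp (-((γ - ξ) * I)) = cexp (ξ / 2 * I) * cexp (-(γ * I)) := by
    rw [← exp_add, ← exp_add]; ring_nf
  linear_combination (norm := ring_nf)
    (cexp (-(I * ξ) / 2) - c * cexp (I * ξ / 2) * cexp (-(γ * I))) * inv_sqrt_two_sq + c / 2 * hE

lemma amplitude_plus_sub_amplitude_minus
    (hS : Sᴴ * S = (2⁻¹ : ℂ) • !![1, c * cexp (γ * I); c * cexp (-γ * I), 1]) (ξ : ℝ) :
    amplitude S ξ plus - amplitude S ξ minus =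
      -(2⁻¹ * cexp (ξ / 2 * I) * (1 - c * cexp ((γ - ξ : ℝ) * I))) := by
  rw [amplitude_eq, amplitude_eq, ← dotProduct_sub, ← mulVec_sub, hS]
  simp [e1, plus, minus, Hm, Rz, mulVec, dotProduct, Fin.sum_univ_succ, Matrix.mul_apply]
  have hE : cexp (ξ / 2 * I) * cexp ((γ - ξ) * I) = cexp (-(ξ / 2) * I) * cexp (γ * I) := by
    rw [← exp_add, ← exp_add]; ring_nf
  linear_combination (norm := ring_nf)
    (c * cexp (-(I * ξ) / 2) * cexp (γ * I) - cexp (I * ξ / 2)) * inv_sqrt_two_sq - c / 2 * hE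

end Amplitudes

theorem strategyI_byproduct_angle_general (U : Matrix (Fin 2) (Fin 2) ℂ) (hU : Uᴴ * U = 1)
    (θ γ ξ : ℝ) (hθ1 : 0 < θ) (hθ2 : θ < Real.pi / 2) :
    let D : Matrix (Fin 2) (Fin 2) ℂ := !![(Real.cos θ : ℂ), 0; 0, (Real.sin θ : ℂ)]
    let S : Matrix (Fin 2) (Fin 2) ℂ := U * D * Hm * Rz (γ : ℂ)
    -- the (unnormalized) outcome-1 measurement vector |m⊥⟩ ∝ S Rz(−ξ) H |1⟩
    let v : Fin 2 → ℂ := (S * Rz ((-ξ : ℝ) : ℂ) * Hm).mulVec e1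
    -- teleported gate M⊥ = H(⟨m⊥|S|+⟩ I + ⟨m⊥|S|−⟩ Z) (normalization absorbed below)
    let Mperp : Matrix (Fin 2) (Fin 2) ℂ :=
      Hm * ((star v ⬝ᵥ S.mulVec plus) • (1 : Matrix (Fin 2) (Fin 2) ℂ) +
        (star v ⬝ᵥ S.mulVec minus) • Zm)
    ∃ (μ' : ℝ) (c : ℂ), c ≠ 0 ∧
      Real.tan (μ' / 2) =
        (1 - Real.cos (2 * θ) * Real.cos (γ - ξ)) / (Real.cos (2 * θ) * Real.sin (γ - ξ)) ∧
      Mperp = c • (Rx ((μ' : ℝ) : ℂ) * Hm * Rz (ξ : ℂ)) := by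
  intro D S v Mperp
  set z : ℂ := 1 - Real.cos (2 * θ) * cexp ((γ - ξ : ℝ) * I)
  have hz : z ≠ 0 := one_sub_mul_exp_ne_zero
    (abs_cos_lt_one_of_sin_ne_zero (Real.sin_pos_of_pos_of_lt_pi (by linarith) (by linarith)).ne') _
  have hS : Sᴴ * S = _ := nTypeOp_conjTranspose_mul_self hU θ γ
  have hadd := amplitude_plus_add_amplitude_minus hS ξ
  have hsub := amplitude_plus_sub_amplitude_minus hS ξ
  refine ⟨2 * arg z + Real.pi,
    (amplitude S ξ plus - amplitude S ξ minus) *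
      cexp (-I * (((2 * arg z + Real.pi : ℝ) : ℂ) + ξ) / 2),
    ?_, ?_, Hm_mul_smul_one_add_smul_Zm (add_eq_sub_mul_exp_of_conj hadd hsub)⟩
  · rw [hsub]
    exact mul_ne_zero (neg_ne_zero.mpr (mul_ne_zero (mul_ne_zero (by norm_num) (exp_ne_zero _)) hz))
      (exp_ne_zero _)
  · have hre : z.re = 1 - Real.cos (2 * θ) * Real.cos (γ - ξ) := by
      simp only [z, sub_re, one_re, re_ofReal_mul, exp_ofReal_mul_I_re]
    have him : z.im = -(Real.cos (2 * θ) * Real.sin (γ - ξ)) := by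
      simp only [z, sub_im, one_im, im_ofReal_mul, exp_ofReal_mul_I_im, zero_sub]
    rw [show (2 * arg z + Real.pi) / 2 = arg z + Real.pi / 2 by ring, tan_arg_add_pi_div_two,
      hre, him, neg_div_neg_eq]

/-- For a non-unitary N-type operator S = U·D·H·Rz(γ), outcome 1 in the Strategy-I basis
(projection onto |m⊥⟩ ∝ S·Rz(−ξ)·H|1⟩) teleports the gate Rx(μ′)·H·Rz(ξ) (up to global
phase and normalization), where tan(μ′/2) = (1 − cos2θ cos(γ−ξ))/(cos2θ sin(γ−ξ)). -/
theorem strategyI_byproduct_angle (U : Matrix (Fin 2) (Fin 2) ℂ) (hU : Uᴴ * U = 1)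
    (θ γ ξ : ℝ) (hθ1 : 0 < θ) (hθ2 : θ < Real.pi / 2) (hθ3 : θ ≠ Real.pi / 4) :
    let D : Matrix (Fin 2) (Fin 2) ℂ := !![(Real.cos θ : ℂ), 0; 0, (Real.sin θ : ℂ)]
    let S : Matrix (Fin 2) (Fin 2) ℂ := U * D * Hm * Rz (γ : ℂ)
    -- the (unnormalized) outcome-1 measurement vector |m⊥⟩ ∝ S Rz(−ξ) H |1⟩
    let v : Fin 2 → ℂ := (S * Rz ((-ξ : ℝ) : ℂ) * Hm).mulVec e1
    -- teleported gate M⊥ = H(⟨m⊥|S|+⟩ I + ⟨m⊥|S|−⟩ Z) (normalization absorbed below)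
    let Mperp : Matrix (Fin 2) (Fin 2) ℂ :=
      Hm * ((star v ⬝ᵥ S.mulVec plus) • (1 : Matrix (Fin 2) (Fin 2) ℂ) +
        (star v ⬝ᵥ S.mulVec minus) • Zm)
    ∃ (μ' : ℝ) (c : ℂ), c ≠ 0 ∧
      Real.tan (μ' / 2) =
        (1 - Real.cos (2 * θ) * Real.cos (γ - ξ)) / (Real.cos (2 * θ) * Real.sin (γ - ξ)) ∧
      Mperp = c • (Rx ((μ' : ℝ) : ℂ) * Hm * Rz (ξ : ℂ)) :=
  strategyI_byproduct_angle_general U hU θ γ ξ hθ1 hθ2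

end
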